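/- A BST-conjunction with n distinct variables is satisfiable if and only if it is satisfied by every partition of size 2^n − 1. -/

import Mathlib

namespace BSTO

/-- The unordered Cartesian product `s ⊗ t = {{u,v} | u ∈ s, v ∈ t}`, as a class of ZFC sets. -/
def uprod (s t : ZFSet) : Set ZFSet := {w | ∃ u ∈ s, ∃ v ∈ t, w = ({u, v} : ZFSet)}

/-- A partition: a collection of pairwise disjoint nonempty sets. -/
def IsPartition (S : ZFSet) : Prop :=
  (∀ b, b ∈ S → b ≠ (∅ : ZFSet)) ∧
    ∀ b, b ∈ S → ∀ c, c ∈ S → b ≠ c → ∀ t, t ∈ b → t ∉ c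

/-- `Pow*₁,₂ B`: members of the intersecting power set of `B` of cardinality 1 or 2. -/
def powAst12 (B : ZFSet) : Set ZFSet :=
  {t | t ⊆ ZFSet.sUnion B ∧ (∀ s, s ∈ B → ∃ u, u ∈ t ∧ u ∈ s) ∧ ∃ u v : ZFSet, t = {u, v}}

/-- BST⊗-formulae. -/
inductive Fmla (V : Type) : Type
  | eqUnion (x y z : V)
  | eqInter (x y z : V)
  | eqDiff  (x y z : V)
  | eqUprod (x y z : V)
  | subset  (x y : V)
  | not (φ : Fmla V)
  | and (φ ψ : Fmla V)
  | or (φ ψ : Fmla V)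

def Fmla.Sat {V : Type} (M : V → ZFSet) : Fmla V → Prop
  | .eqUnion x y z => M x = M y ∪ M z
  | .eqInter x y z => M x = M y ∩ M z
  | .eqDiff x y z  => M x = M y \ M z
  | .eqUprod x y z => (M x).toSet = uprod (M y) (M z)
  | .subset x y    => M x ⊆ M y
  | .not φ         => ¬ Fmla.Sat M φ
  | .and φ ψ       => Fmla.Sat M φ ∧ Fmla.Sat M ψ
  | .or φ ψ        => Fmla.Sat M φ ∨ Fmla.Sat M ψ

/-- A partition `S` satisfies `φ` if the set assignment induced by some
partition assignment `J` (mapping variables to sets of blocks) models `φ`. -/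
def SatByPartition {V : Type} (S : ZFSet) (φ : Fmla V) : Prop :=
  ∃ J : V → ZFSet, (∀ v, J v ⊆ S) ∧ Fmla.Sat (fun v => ZFSet.sUnion (J v)) φ

/-- BST literals. -/
inductive BSTLit (V : Type) : Type
  | eqUnion (x y z : V)
  | eqDiff  (x y z : V)
  | ne (x y : V)

def BSTLit.Sat {V : Type} (M : V → ZFSet) : BSTLit V → Prop
  | .eqUnion x y z => M x = M y ∪ M z
  | .eqDiff x y z  => M x = M y \ M z
  | .ne x y        => M x ≠ M y

/-- A map `F : V → pow(pow⁺ V)` fulfills a BST literal. -/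
def BSTLit.FulfilledBy {V : Type} (F : V → Set (Set V)) : BSTLit V → Prop
  | .eqUnion x y z => F x = F y ∪ F z
  | .eqDiff x y z  => F x = F y \ F z
  | .ne x y        => F x ≠ F y

/-- BST⊗ literals. -/
inductive Lit (V : Type) : Type
  | eqUnion (x y z : V)
  | eqDiff  (x y z : V)
  | eqUprod (x y z : V)
  | ne (x y : V)

def Lit.Sat {V : Type} (M : V → ZFSet) : Lit V → Prop
  | .eqUnion x y z => M x = M y ∪ M z
  | .eqDiff x y z  => M x = M y \ M z
  | .eqUprod x y z => (M x).toSet = uprod (M y) (M z)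
  | .ne x y        => M x ≠ M y

/-- The nodes over a set of places: nonempty subsets of cardinality at most 2. -/
def NodesOf (P : Type) : Set (Set P) := {A | ∃ p q : P, A = {p, q}}

/-- Unordered product of two sets of places: the set of nodes `{u,v}`, `u ∈ s`, `v ∈ t`. -/
def setUprod {P : Type} (s t : Set P) : Set (Set P) := {A | ∃ u ∈ s, ∃ v ∈ t, A = {u, v}}

/-- Accessibility of a place from the source places, w.r.t. a target map `T`. -/
inductive Accessible {P : Type} (T : Set P → Set P) : P → Prop
  | source (p : P) (h : ∀ A ∈ NodesOf P, p ∉ T A) : Accessible T p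
  | step (p : P) (A : Set P) (hA : A ∈ NodesOf P)
      (hacc : ∀ q ∈ A, Accessible T q) (hp : p ∈ T A) : Accessible T p

/-- Conditions (a), (b), (c1)-(c3) for a literal, w.r.t. a ⊗-graph with target map `T`
and a candidate fulfilling map `F`. -/
def Lit.GraphFulfilled {P V : Type} (T : Set P → Set P) (F : V → Set P) : Lit V → Prop
  | .eqUnion x y z => F x = F y ∪ F z
  | .eqDiff x y z  => F x = F y \ F z
  | .ne x y        => F x ≠ F y
  | .eqUprod x y z =>
      (∀ υ ∈ F y, ∀ ζ ∈ F z, (T {υ, ζ}).Nonempty ∧ T {υ, ζ} ⊆ F x) ∧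
      F x ⊆ (⋃ A ∈ setUprod (F y) (F z), T A) ∧
      (⋃ A ∈ NodesOf P \ setUprod (F y) (F z), T A) ∩ F x = ∅

/-- A ⊗-graph (given by its target map `T`) fulfills the conjunction `Φ` via `F`. -/
def Fulfills {P V : Type} (T : Set P → Set P) (F : V → Set P) (Φ : List (Lit V)) : Prop :=
  ∀ l ∈ Φ, Lit.GraphFulfilled T F l

/-- `S'` is a ⊗-subpartition of the partition `S`. -/
def OSubpart (S : ZFSet) (S' : Set ZFSet) : Prop :=
  S' ⊆ S.toSet ∧ ∃ B : Set ZFSet,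
    (∀ b ∈ B, ∃ p, p ∈ S ∧ ∃ q, q ∈ S ∧ b = ({p, q} : ZFSet)) ∧
    (⋃ c ∈ S', c.toSet) = ⋃ b ∈ B, powAst12 b

/-- `Σ_⊗`: the maximal ⊗-subpartition of `S` (the union of all ⊗-subpartitions). -/
def sigmaOtimes (S : ZFSet) : Set ZFSet := {b | ∃ S', OSubpart S S' ∧ b ∈ S'}

/-- The target map of the ⊗-graph induced by a partition `S` via the bijection `e`,
relative to the set `Pi` of ⊗-upblocks. -/
def inducedT (S : ZFSet) {P : Type} (e : P ≃ S.toSet) (Pi : Set ZFSet) (A : Set P) :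
    Set P :=
  {q | ∃ p₁ p₂ : P, A = {p₁, p₂} ∧ ({(e p₁ : ZFSet), (e p₂ : ZFSet)} : ZFSet) ∈ Pi ∧
    (e q : ZFSet) ∈ sigmaOtimes S ∧
    ((e q : ZFSet).toSet ∩ powAst12 ({(e p₁ : ZFSet), (e p₂ : ZFSet)} : ZFSet)).Nonempty}

/-- `m` is the maximum of `Sp` w.r.t. the strict order `r`. -/
def IsMaxIn {P : Type} (r : P → P → Prop) (Sp : Set P) (m : P) : Prop :=
  m ∈ Sp ∧ ∀ p ∈ Sp, p = m ∨ r p m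

/-- `r` is a topological ⊗-order for the ⊗-graph with target map `T`:
a strict total order on places with `max A ≺ max T(A)` for every ⊗-node `A`. -/
def IsTopOOrder {P : Type} (T : Set P → Set P) (r : P → P → Prop) : Prop :=
  (∀ a, ¬ r a a) ∧ (∀ a b c, r a b → r b c → r a c) ∧ (∀ a b, a ≠ b → r a b ∨ r b a) ∧
  ∀ A ∈ NodesOf P, (T A).Nonempty →
    ∃ m m', IsMaxIn r A m ∧ IsMaxIn r (T A) m' ∧ r m m'

/-- Hereditarily finite ZFC sets. -/
inductive IsHF : ZFSet → Prop
  | mk (x : ZFSet) (hfin : x.toSet.Finite) (hmem : ∀ y ∈ x, IsHF y) : IsHF x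

/-! Whether a set assignment `M` satisfies a BST literal depends only on which Venn regions
`{v | t ∈ M v}` it realizes, and the empty region is always realized. Given a partition with
one block for each nonempty `σ ⊆ V`, i.e. with `2 ^ |V| - 1` blocks, assigning to `v` the blocks
of the realized regions that contain `v` realizes exactly the same regions. So a satisfiable
conjunction is satisfied by every such partition; conversely a partition solution yields a set
assignment, which can be moved to any universe the same way. -/

section VennRegions

variable {V : Type}

def vennRegion (M : V → ZFSet) (t : ZFSet) : Set V := {v | t ∈ M v}

def BSTLit.HoldsOn (R : Set (Set V)) : BSTLit V → Prop
  | .eqUnion x y z => ∀ σ ∈ R, x ∈ σ ↔ y ∈ σ ∨ z ∈ σ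
  | .eqDiff x y z  => ∀ σ ∈ R, x ∈ σ ↔ y ∈ σ ∧ z ∉ σ
  | .ne x y        => ∃ σ ∈ R, ¬(x ∈ σ ↔ y ∈ σ)

theorem BSTLit.sat_iff_holdsOn (M : V → ZFSet) (l : BSTLit V) :
    l.Sat M ↔ l.HoldsOn (Set.range (vennRegion M)) := by
  cases l <;>
    simp [BSTLit.Sat, BSTLit.HoldsOn, vennRegion, ZFSet.ext_iff, not_forall]

theorem empty_mem_range_vennRegion [Small.{u} V] (M : V → ZFSet.{u}) :
    ∅ ∈ Set.range (vennRegion M) := by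
  refine ⟨ZFSet.iUnion M, Set.eq_empty_of_forall_notMem fun v hv => ?_⟩
  exact ZFSet.mem_irrefl _ (ZFSet.subset_iUnion M v hv)

noncomputable def regionBlocks (b : {σ : Set V // σ.Nonempty} → ZFSet.{u})
    (R : Set (Set V)) (v : V) : ZFSet.{u} :=
  ZFSet.range fun σ : {σ : {σ : Set V // σ.Nonempty} // σ.1 ∈ R ∧ v ∈ σ.1} => b σ

theorem mem_sUnion_regionBlocks {b : {σ : Set V // σ.Nonempty} → ZFSet.{u}}
    {R : Set (Set V)} {v : V} {t : ZFSet.{u}} :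
    t ∈ ZFSet.sUnion (regionBlocks b R v) ↔ ∃ σ, σ.1 ∈ R ∧ v ∈ σ.1 ∧ t ∈ b σ := by
  simp [regionBlocks, and_assoc]

variable {b : {σ : Set V // σ.Nonempty} → ZFSet.{u}}

theorem vennRegion_regionBlocks_of_mem (hdisj : Pairwise fun σ τ => ∀ t ∈ b σ, t ∉ b τ)
    {R : Set (Set V)} {σ : {σ : Set V // σ.Nonempty}} (hσ : σ.1 ∈ R) {t : ZFSet.{u}}
    (ht : t ∈ b σ) : vennRegion (fun v => ZFSet.sUnion (regionBlocks b R v)) t = σ.1 := by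
  ext v
  simp only [vennRegion, Set.mem_ofPred_eq, mem_sUnion_regionBlocks]
  refine ⟨fun ⟨τ, _, hv, htτ⟩ => ?_, fun hv => ⟨σ, hσ, hv, ht⟩⟩
  rwa [← hdisj.eq fun h => h t htτ ht]

theorem range_vennRegion_regionBlocks (hne : ∀ σ, (b σ).Nonempty)
    (hdisj : Pairwise fun σ τ => ∀ t ∈ b σ, t ∉ b τ) (R : Set (Set V)) :
    Set.range (vennRegion fun v => ZFSet.sUnion (regionBlocks b R v)) = insert ∅ R := by
  ext σ
  constructor
  · rintro ⟨t, rfl⟩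
    by_cases h : ∃ τ : {σ : Set V // σ.Nonempty}, τ.1 ∈ R ∧ t ∈ b τ
    · obtain ⟨τ, hτ, ht⟩ := h
      exact Or.inr (vennRegion_regionBlocks_of_mem hdisj hτ ht ▸ hτ)
    · refine Or.inl (Set.eq_empty_of_forall_notMem fun v hv => h ?_)
      obtain ⟨τ, hτ, -, ht⟩ := mem_sUnion_regionBlocks.mp hv
      exact ⟨τ, hτ, ht⟩
  · rintro (rfl | hσ)
    · exact empty_mem_range_vennRegion _
    obtain rfl | hσne := σ.eq_empty_or_nonempty
    · exact empty_mem_range_vennRegion _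
    obtain ⟨t, ht⟩ := hne ⟨σ, hσne⟩
    exact ⟨t, vennRegion_regionBlocks_of_mem hdisj (σ := ⟨σ, hσne⟩) hσ ht⟩

end VennRegions

theorem isPartition_range_singleton {α : Type} (x : α → ZFSet.{u}) :
    IsPartition (ZFSet.range fun i => {x i}) := by
  constructor
  · intro _ hb h
    obtain ⟨i, rfl⟩ := ZFSet.mem_range.mp hb
    exact ZFSet.notMem_empty (x i) (h ▸ ZFSet.mem_singleton.mpr rfl)
  · intro _ hb _ hc hbc t hi hj
    obtain ⟨i, rfl⟩ := ZFSet.mem_range.mp hb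
    obtain ⟨j, rfl⟩ := ZFSet.mem_range.mp hc
    rw [ZFSet.mem_singleton] at hi hj
    exact hbc (by rw [← hi, ← hj])

theorem exists_partition_ncard (k : ℕ) :
    ∃ S : ZFSet.{u}, IsPartition S ∧ S.toSet.Finite ∧ S.toSet.ncard = k := by
  set block : Fin k → ZFSet.{u} := fun i => {Ordinal.toZFSet (i : ℕ)}
  have hblock : Function.Injective block := ZFSet.singleton_injective.comp <|
    Ordinal.toZFSet_injective.comp <| Nat.cast_injective.comp Fin.val_injective
  have hrange : (ZFSet.range block).toSet = Set.range block := ZFSet.coe_range block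
  refine ⟨ZFSet.range block, isPartition_range_singleton _, hrange ▸ Set.finite_range block, ?_⟩
  rw [hrange, Set.ncard_range_of_injective hblock, Nat.card_fin]

theorem nonempty_equiv_of_ncard {V : Type} [Finite V] {S : ZFSet.{u}} (hfin : S.toSet.Finite)
    (hcard : S.toSet.ncard = 2 ^ Nat.card V - 1) :
    Nonempty ({σ : Set V // σ.Nonempty} ≃ S.toSet) := by
  have := hfin.to_subtype
  have := Fintype.ofFinite V
  refine Finite.card_eq.mp ?_
  rw [Nat.card_coe_set_eq, hcard]
  simp [Set.nonempty_iff_ne_empty, Nat.card_eq_fintype_card, Fintype.card_subtype_compl]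

theorem exists_partitionAssignment_of_sat {V : Type} {Φ : List (BSTLit V)}
    {M : V → ZFSet.{u}} (hM : ∀ l ∈ Φ, l.Sat M) {S : ZFSet.{w}} (hS : IsPartition S)
    (e : {σ : Set V // σ.Nonempty} ≃ S.toSet) :
    ∃ J : V → ZFSet.{w}, (∀ v, J v ⊆ S) ∧ ∀ l ∈ Φ, l.Sat fun v => ZFSet.sUnion (J v) := by
  have hne (σ) : (e σ : ZFSet).Nonempty :=
    (ZFSet.eq_empty_or_nonempty _).resolve_left (hS.1 _ (e σ).2)
  have hdisj : Pairwise fun σ τ => ∀ t ∈ (e σ : ZFSet), t ∉ (e τ : ZFSet) := fun σ τ hστ =>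
    hS.2 _ (e σ).2 _ (e τ).2 fun h => hστ (e.injective (Subtype.ext h))
  refine ⟨regionBlocks (fun σ => e σ) (Set.range (vennRegion M)), fun v t ht => ?_,
    fun l hl => ?_⟩
  · obtain ⟨σ, rfl⟩ := ZFSet.mem_range.mp ht
    exact (e σ).2
  · rw [BSTLit.sat_iff_holdsOn, range_vennRegion_regionBlocks hne hdisj,
      Set.insert_eq_of_mem (empty_mem_range_vennRegion M), ← BSTLit.sat_iff_holdsOn]
    exact hM l hl

/-- a BST-conjunction with `n` distinct variables is satisfiable iff
it is satisfied by every partition of size `2^n - 1`. -/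
theorem stmt5 {n : ℕ} (Φ : List (BSTLit (Fin n))) :
    (∃ M : Fin n → ZFSet, ∀ l ∈ Φ, BSTLit.Sat M l) ↔
      ∀ S : ZFSet, IsPartition S → S.toSet.Finite → S.toSet.ncard = 2 ^ n - 1 →
        ∃ J : Fin n → ZFSet, (∀ v, J v ⊆ S) ∧
          ∀ l ∈ Φ, BSTLit.Sat (fun v => ZFSet.sUnion (J v)) l := by
  constructor
  · rintro ⟨M, hM⟩ S hS hfin hcard
    obtain ⟨e⟩ := nonempty_equiv_of_ncard hfin (by rwa [Nat.card_fin])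
    exact exists_partitionAssignment_of_sat hM hS e
  · intro h
    obtain ⟨S, hS, hfin, hcard⟩ := exists_partition_ncard (2 ^ n - 1)
    obtain ⟨J, -, hJ⟩ := h S hS hfin hcard
    obtain ⟨S', hS', hfin', hcard'⟩ := exists_partition_ncard (2 ^ n - 1)
    obtain ⟨e⟩ := nonempty_equiv_of_ncard hfin' (by rwa [Nat.card_fin])
    obtain ⟨J', -, hJ'⟩ := exists_partitionAssignment_of_sat hJ hS' e
    exact ⟨_, hJ'⟩

end BSTO
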